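/- arXiv:math/9806062 — 4 statements merged into one kernel-verified Lean document; each statement's English description precedes it below -/
import Mathlib

section
/- Let (K, π, τ_K) be a real coisotropic quantum left subgroup of F and let a ∈ B_π := {a ∈ F : (π⊗id)(Δa) = π(1)⊗a}. Then π(a*) = conj(ε(a))·π(1) = ε(a*)·π(1). -/
open scoped TensorProduct
open Coalgebra

noncomputable section

variable {F : Type*} [Ring F] [HopfAlgebra ℂ F] [StarRing F] [StarModule ℂ F]
variable {K : Type*} [AddCommGroup K] [Module ℂ K] [Coalgebra ℂ K]

/-- The left quantum homogeneous space `B_π = {a | (π ⊗ id)(Δ a) = π(1) ⊗ a}`,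
as a subspace of `F`. -/
def Bpi (π : F →ₗ[ℂ] K) : Submodule ℂ F :=
  LinearMap.ker ((LinearMap.rTensor F π ∘ₗ Coalgebra.comul) - TensorProduct.mk ℂ K F (π 1))

/-!
The map `k ⊗ b ↦ b* · τ_K(k)` is well defined on `K ⊗ F`, being conjugate-linear
in both arguments. On `(π ⊗ id)(Δa) = Σ π(a₍₁₎) ⊗ a₍₂₎` it gives
`Σ π(a₍₂₎* (S a₍₁₎)*) = π((Σ S(a₍₁₎) a₍₂₎)*) = conj(ε(a)) π(1)` by the antipode axiom,
while on `π(1) ⊗ a` it gives `a* · π(S(1)*) = π(a*)`.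
-/

theorem mem_Bpi {A M : Type*} [Ring A] [HopfAlgebra ℂ A] [AddCommGroup M] [Module ℂ M]
    {π : A →ₗ[ℂ] M} {a : A} :
    a ∈ Bpi π ↔ LinearMap.rTensor A π (comul a) = π 1 ⊗ₜ[ℂ] a := by
  simp [Bpi, sub_eq_zero]

section StarAct

variable {A M : Type*} [AddCommGroup M] [Module ℂ M]

def tensorStarAct [Ring A] [Algebra ℂ A] [StarRing A] [StarModule ℂ A]
    (act : A →ₗ[ℂ] M →ₗ[ℂ] M) (τ : M →ₗ⋆[ℂ] M) : M ⊗[ℂ] A →+ M :=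
  TensorProduct.liftAddHom
    (AddMonoidHom.mk' (fun k => AddMonoidHom.mk' (fun b => act (star b) (τ k))
        (fun b c => by simp [star_add]))
      (fun x y => by ext b; simp))
    (fun c k b => by simp [star_smul, map_smulₛₗ])

@[simp]
theorem tensorStarAct_tmul [Ring A] [Algebra ℂ A] [StarRing A] [StarModule ℂ A]
    (act : A →ₗ[ℂ] M →ₗ[ℂ] M) (τ : M →ₗ⋆[ℂ] M) (k : M) (b : A) :
    tensorStarAct act τ (k ⊗ₜ b) = act (star b) (τ k) :=
  TensorProduct.liftAddHom_tmul _ _ _ _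

variable [Ring A] [HopfAlgebra ℂ A] [StarRing A] [StarModule ℂ A]
  {act : A →ₗ[ℂ] M →ₗ[ℂ] M} {τ : M →ₗ⋆[ℂ] M} {π : A →ₗ[ℂ] M}

theorem tensorStarAct_rTensor (hact_π : ∀ a b : A, act a (π b) = π (a * b))
    (hτ_π : ∀ a : A, τ (π a) = π (star (HopfAlgebra.antipode ℂ a))) (t : A ⊗[ℂ] A) :
    tensorStarAct act τ (LinearMap.rTensor A π t) =
      π (star (LinearMap.mul' ℂ A (LinearMap.rTensor A (HopfAlgebra.antipode ℂ) t))) := by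
  induction t using TensorProduct.induction_on with
  | zero => simp
  | tmul x b => simp [hτ_π, hact_π, star_mul]
  | add s t hs ht => simp only [map_add, hs, ht, star_add]

theorem map_star_eq_of_mem_Bpi (hact_π : ∀ a b : A, act a (π b) = π (a * b))
    (hτ_π : ∀ a : A, τ (π a) = π (star (HopfAlgebra.antipode ℂ a))) {a : A}
    (ha : a ∈ Bpi π) :
    π (star a) = starRingEnd ℂ (counit a) • π 1 := by
  calc π (star a) = tensorStarAct act τ (π 1 ⊗ₜ a) := by
        simp [hτ_π, HopfAlgebra.antipode_one, hact_π]
    _ = tensorStarAct act τ (LinearMap.rTensor A π (comul a)) := by rw [mem_Bpi.mp ha]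
    _ = π (star (algebraMap ℂ A (counit a))) := by
        rw [tensorStarAct_rTensor hact_π hτ_π, HopfAlgebra.mul_antipode_rTensor_comul_apply]
    _ = starRingEnd ℂ (counit a) • π 1 := by
        rw [Algebra.algebraMap_eq_smul_one, star_smul, star_one, map_smul, starRingEnd_apply]

end StarAct

theorem statement3_general
    (hcounit_star : ∀ a : F, (Coalgebra.counit (star a) : ℂ) = starRingEnd ℂ (Coalgebra.counit a))
    (π : F →ₗ[ℂ] K)
    (act : F →ₗ[ℂ] K →ₗ[ℂ] K)
    (hact_π : ∀ a b : F, act a (π b) = π (a * b))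
    (τK : K → K)
    (hτK_add : ∀ x y : K, τK (x + y) = τK x + τK y)
    (hτK_smul : ∀ (c : ℂ) (x : K), τK (c • x) = (starRingEnd ℂ) c • τK x)
    (hτK_π : ∀ a : F, τK (π a) = π (star (HopfAlgebra.antipode (R := ℂ) a)))
    (a : F) (ha : a ∈ Bpi π) :
    π (star a) = (starRingEnd ℂ) (Coalgebra.counit a) • π 1 ∧
    π (star a) = (Coalgebra.counit (star a) : ℂ) • π 1 := by
  let τ : K →ₗ⋆[ℂ] K := { toFun := τK, map_add' := hτK_add, map_smul' := hτK_smul }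
  have key := map_star_eq_of_mem_Bpi (τ := τ) hact_π hτK_π ha
  exact ⟨key, by rw [hcounit_star]; exact key⟩

/-- For a real coisotropic quantum left subgroup `(K, π, τ_K)` of `F` and `a ∈ B_π`,
one has `π(a*) = conj(ε(a)) π(1) = ε(a*) π(1)`. -/
theorem statement3
    (hcomul_star : ∀ (a : F) {ι : Type*} (r : Coalgebra.Repr ℂ a ι),
      Coalgebra.comul (star a) = ∑ i ∈ r.index, star (r.left i) ⊗ₜ[ℂ] star (r.right i))
    (hcounit_star : ∀ a : F, (Coalgebra.counit (star a) : ℂ) = starRingEnd ℂ (Coalgebra.counit a))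
    (hSbij : Function.Bijective (HopfAlgebra.antipode (R := ℂ) (A := F)))
    (π : F →ₗ[ℂ] K) (hπsurj : Function.Surjective π)
    (hπcomul : ∀ a : F, Coalgebra.comul (π a) = TensorProduct.map π π (Coalgebra.comul a))
    (hπcounit : ∀ a : F, (Coalgebra.counit (π a) : ℂ) = (Coalgebra.counit a : ℂ))
    (act : F →ₗ[ℂ] K →ₗ[ℂ] K)
    (hact_one : ∀ k : K, act 1 k = k)
    (hact_mul : ∀ (a b : F) (k : K), act (a * b) k = act a (act b k))
    (hact_π : ∀ a b : F, act a (π b) = π (a * b))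
    (τK : K → K)
    (hτK_add : ∀ x y : K, τK (x + y) = τK x + τK y)
    (hτK_smul : ∀ (c : ℂ) (x : K), τK (c • x) = (starRingEnd ℂ) c • τK x)
    (hτK_π : ∀ a : F, τK (π a) = π (star (HopfAlgebra.antipode (R := ℂ) a)))
    (Sinv : F →ₗ[ℂ] F)
    (hSinv₁ : ∀ a : F, Sinv (HopfAlgebra.antipode (R := ℂ) a) = a)
    (hSinv₂ : ∀ a : F, HopfAlgebra.antipode (R := ℂ) (Sinv a) = a)
    (a : F) (ha : a ∈ Bpi π) :
    π (star a) = (starRingEnd ℂ) (Coalgebra.counit a) • π 1 ∧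
    π (star a) = (Coalgebra.counit (star a) : ℂ) • π 1 :=
  statement3_general hcounit_star π act hact_π τK hτK_add hτK_smul hτK_π a ha
end
end

section
/- Let (K, π, τ_K) be a real coisotropic quantum left subgroup of F and ρ_R a right corepresentation of K on V. Then the restriction of id_V⊗Δ to ind_K^G(ρ_R) maps ind_K^G(ρ_R) into ind_K^G(ρ_R)⊗F (viewed inside V⊗F⊗F), and defines a right F-comodule structure on ind_K^G(ρ_R) (the coassociativity and counit axioms hold). This is the induced corepresentation of F. -/
/-!
The induced space is the kernel of `id ⊗ L - (ρ_R ⊗ id) : V ⊗ F → V ⊗ K ⊗ F`, and both maps are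
`F`-colinear for the coactions given by `Δ` on the last tensor factor: `L = (π ⊗ id) ∘ Δ` by
coassociativity of `Δ`, and `ρ_R ⊗ id` because it does not touch that factor. Over a field every
module is flat, so the kernel of a colinear map is a subcomodule; hence `id ⊗ Δ` restricts to it,
and the restriction inherits coassociativity and the counit axiom from the cofree comodule `V ⊗ F`.
-/

open scoped TensorProduct
open Coalgebra

noncomputable section

section Coaction

open LinearMap

variable {R C M N P : Type*} [CommRing R] [AddCommGroup C] [Module R C]
  [AddCommGroup M] [Module R M] [AddCommGroup N] [Module R N] [AddCommGroup P] [Module R P]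

variable (M) in
def lTensorCoaction (δ : P →ₗ[R] P ⊗[R] C) : M ⊗[R] P →ₗ[R] (M ⊗[R] P) ⊗[R] C :=
  (TensorProduct.assoc R M P C).symm.toLinearMap ∘ₗ δ.lTensor M

def IsColinear (δM : M →ₗ[R] M ⊗[R] C) (δN : N →ₗ[R] N ⊗[R] C) (f : M →ₗ[R] N) : Prop :=
  δN ∘ₗ f = f.rTensor C ∘ₗ δM

theorem IsColinear.comp {δM : M →ₗ[R] M ⊗[R] C} {δN : N →ₗ[R] N ⊗[R] C} {δP : P →ₗ[R] P ⊗[R] C}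
    {g : N →ₗ[R] P} {f : M →ₗ[R] N} (hg : IsColinear δN δP g) (hf : IsColinear δM δN f) :
    IsColinear δM δP (g ∘ₗ f) := by
  unfold IsColinear at *
  rw [← comp_assoc, hg, comp_assoc, hf, ← comp_assoc, ← rTensor_comp]

theorem IsColinear.sub {δM : M →ₗ[R] M ⊗[R] C} {δN : N →ₗ[R] N ⊗[R] C} {f g : M →ₗ[R] N}
    (hf : IsColinear δM δN f) (hg : IsColinear δM δN g) : IsColinear δM δN (f - g) := by
  unfold IsColinear at *
  rw [comp_sub, hf, hg, rTensor_sub, sub_comp]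

theorem IsColinear.lTensor {δN : N →ₗ[R] N ⊗[R] C} {δP : P →ₗ[R] P ⊗[R] C} {f : N →ₗ[R] P}
    (hf : IsColinear δN δP f) :
    IsColinear (lTensorCoaction M δN) (lTensorCoaction M δP) (f.lTensor M) := by
  unfold IsColinear lTensorCoaction at *
  rw [comp_assoc, ← lTensor_comp, hf, lTensor_comp, ← comp_assoc, ← comp_assoc,
    ← rTensor_lTensor_comp_assoc_symm]

theorem isColinear_rTensor (g : M →ₗ[R] N) (δ : P →ₗ[R] P ⊗[R] C) :
    IsColinear (lTensorCoaction M δ) (lTensorCoaction N δ) (g.rTensor P) := by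
  unfold IsColinear lTensorCoaction
  rw [comp_assoc, lTensor_comp_rTensor, ← rTensor_comp_lTensor, ← comp_assoc, ← comp_assoc,
    rTensor_tensor, LinearEquiv.symm_comp_assoc]

theorem isColinear_assoc (δ : P →ₗ[R] P ⊗[R] C) :
    IsColinear (lTensorCoaction (M ⊗[R] N) δ) (lTensorCoaction M (lTensorCoaction N δ))
      (TensorProduct.assoc R M N P).toLinearMap := by
  unfold IsColinear lTensorCoaction
  ext m n p
  simp only [TensorProduct.AlgebraTensorModule.curry_apply, restrictScalars_self,
    TensorProduct.curry_apply, coe_comp, LinearEquiv.coe_coe, Function.comp_apply,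
    TensorProduct.assoc_tmul, lTensor_tmul]
  induction δ p with
  | zero => simp
  | tmul p c => rfl
  | add x y hx hy => simp_all [TensorProduct.tmul_add]

theorem IsColinear.mem_range_rTensor_subtype_ker [Module.Flat R C] {δM : M →ₗ[R] M ⊗[R] C}
    {δN : N →ₗ[R] N ⊗[R] C} {f : M →ₗ[R] N} (hf : IsColinear δM δN f) {x : M}
    (hx : x ∈ LinearMap.ker f) : δM x ∈ LinearMap.range ((LinearMap.ker f).subtype.rTensor C) := by
  refine (Module.Flat.rTensor_exact C f.exact_subtype_ker_map (δM x)).mp ?_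
  rw [← LinearMap.comp_apply, ← hf, LinearMap.comp_apply, LinearMap.mem_ker.mp hx, map_zero]

theorem rid_comp_assoc_symm :
    (TensorProduct.rid R (M ⊗[R] P)).toLinearMap ∘ₗ (TensorProduct.assoc R M P R).symm.toLinearMap
      = (TensorProduct.rid R P).toLinearMap.lTensor M :=
  TensorProduct.ext <| LinearMap.ext fun _ ↦ TensorProduct.ext' fun _ _ ↦ by simp

variable [Coalgebra R C]

structure IsCoaction (δ : M →ₗ[R] M ⊗[R] C) : Prop where
  coassoc : (TensorProduct.assoc R M C C).toLinearMap ∘ₗ δ.rTensor C ∘ₗ δ = comul.lTensor M ∘ₗ δ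
  rid_counit : (TensorProduct.rid R M).toLinearMap ∘ₗ counit.lTensor M ∘ₗ δ = LinearMap.id

theorem isCoaction_comul : IsCoaction (comul : C →ₗ[R] C ⊗[R] C) where
  coassoc := Coalgebra.coassoc
  rid_counit := by
    rw [Coalgebra.lTensor_counit_comp_comul]
    ext
    simp

theorem isColinear_comul : IsColinear comul (lTensorCoaction C comul) (comul : C →ₗ[R] C ⊗[R] C) :=
  Coalgebra.coassoc_symm

theorem isCoaction_lTensorCoaction {δ : P →ₗ[R] P ⊗[R] C} (h : IsCoaction δ) :
    IsCoaction (lTensorCoaction M δ) where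
  coassoc := by
    rw [lTensorCoaction, TensorProduct.assoc_tensor, lTensor_tensor]
    simp only [LinearEquiv.coe_trans, rTensor_comp, comp_assoc, ← LinearEquiv.coe_rTensor,
      ← LinearEquiv.symm_rTensor, LinearEquiv.comp_symm_assoc]
    rw [← comp_assoc (lTensor M δ), rTensor_lTensor_comp_assoc_symm, comp_assoc,
      LinearEquiv.comp_symm_assoc, LinearEquiv.coe_lTensor, ← lTensor_comp, ← lTensor_comp,
      ← lTensor_comp, h.coassoc]
  rid_counit := by
    rw [lTensorCoaction, lTensor_tensor]
    simp only [comp_assoc, LinearEquiv.comp_symm_assoc]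
    rw [← comp_assoc _ _ (TensorProduct.rid R (M ⊗[R] P)).toLinearMap, rid_comp_assoc_symm,
      ← lTensor_comp, ← lTensor_comp, h.rid_counit, lTensor_id]

end Coaction

namespace Submodule

open LinearMap

variable {R C M : Type*} [CommRing R] [AddCommGroup C] [Module R C] [Module.Flat R C]
  [AddCommGroup M] [Module R M] (N : Submodule R M) (δ : M →ₗ[R] M ⊗[R] C)
  (hN : ∀ x ∈ N, δ x ∈ LinearMap.range (N.subtype.rTensor C))

theorem rTensor_subtype_injective : Function.Injective (N.subtype.rTensor C) :=
  Module.Flat.rTensor_preserves_injective_linearMap _ N.injective_subtype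

def restrictCoaction : N →ₗ[R] N ⊗[R] C :=
  (LinearEquiv.ofInjective _ N.rTensor_subtype_injective).symm.toLinearMap ∘ₗ
    (δ ∘ₗ N.subtype).codRestrict _ fun x ↦ hN x x.2

theorem rTensor_subtype_comp_restrictCoaction :
    N.subtype.rTensor C ∘ₗ N.restrictCoaction δ hN = δ ∘ₗ N.subtype :=
  LinearMap.ext fun x ↦
    LinearEquiv.ofInjective_symm_apply (h := N.rTensor_subtype_injective) _ ⟨δ x, hN x x.2⟩

theorem isCoaction_restrictCoaction [Coalgebra R C] (h : IsCoaction δ) :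
    IsCoaction (N.restrictCoaction δ hN) where
  coassoc := by
    have hρ := N.rTensor_subtype_comp_restrictCoaction δ hN
    refine (cancel_left (N.rTensor_subtype_injective (C := C ⊗[R] C))).mp ?_
    calc N.subtype.rTensor (C ⊗[R] C) ∘ₗ (TensorProduct.assoc R N C C).toLinearMap ∘ₗ
          (N.restrictCoaction δ hN).rTensor C ∘ₗ N.restrictCoaction δ hN
        = (TensorProduct.assoc R M C C).toLinearMap ∘ₗ
            (N.subtype.rTensor C ∘ₗ N.restrictCoaction δ hN).rTensor C ∘ₗ
              N.restrictCoaction δ hN := by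
          rw [rTensor_tensor, rTensor_comp]
          simp only [comp_assoc, LinearEquiv.symm_comp_assoc]
      _ = (TensorProduct.assoc R M C C).toLinearMap ∘ₗ δ.rTensor C ∘ₗ δ ∘ₗ N.subtype := by
          rw [hρ, rTensor_comp, comp_assoc, hρ]
      _ = N.subtype.rTensor (C ⊗[R] C) ∘ₗ comul.lTensor N ∘ₗ N.restrictCoaction δ hN := by
          rw [← comp_assoc N.subtype δ, ← comp_assoc N.subtype, h.coassoc, comp_assoc, ← hρ,
            ← comp_assoc, lTensor_comp_rTensor, ← rTensor_comp_lTensor, comp_assoc]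
  rid_counit := by
    have hρ := N.rTensor_subtype_comp_restrictCoaction δ hN
    refine (cancel_left N.injective_subtype).mp ?_
    have hrid : N.subtype ∘ₗ (TensorProduct.rid R N).toLinearMap
        = (TensorProduct.rid R M).toLinearMap ∘ₗ N.subtype.rTensor R :=
      TensorProduct.ext' fun _ _ ↦ by simp
    rw [← comp_assoc, hrid, comp_assoc, ← comp_assoc _ _ (N.subtype.rTensor R),
      rTensor_comp_lTensor, ← lTensor_comp_rTensor, comp_assoc, hρ, ← comp_assoc N.subtype δ,
      ← comp_assoc N.subtype, h.rid_counit, id_comp, comp_id]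

end Submodule

variable {F : Type*} [Ring F] [HopfAlgebra ℂ F] [StarRing F] [StarModule ℂ F]
variable {K : Type*} [AddCommGroup K] [Module ℂ K] [Coalgebra ℂ K]
variable {V : Type*} [AddCommGroup V] [Module ℂ V]

/-- The induced space `ind_K^G(ρ_R) = {A ∈ V ⊗ F | (id ⊗ L)A = (ρ_R ⊗ id)A}`,
where `L = (π ⊗ id) ∘ Δ`. -/
def indK (π : F →ₗ[ℂ] K) (ρR : V →ₗ[ℂ] V ⊗[ℂ] K) : Submodule ℂ (V ⊗[ℂ] F) :=
  LinearMap.ker (LinearMap.lTensor V (LinearMap.rTensor F π ∘ₗ Coalgebra.comul)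
    - (TensorProduct.assoc ℂ V K F).toLinearMap ∘ₗ LinearMap.rTensor F ρR)

theorem statement13_general
    (π : F →ₗ[ℂ] K)
    (ρR : V →ₗ[ℂ] V ⊗[ℂ] K)
    :
    ∃ ρ : indK π ρR →ₗ[ℂ] (indK π ρR) ⊗[ℂ] F,
      -- `ρ` is the restriction of `id_V ⊗ Δ`
      (∀ A : indK π ρR,
        LinearMap.rTensor F (indK π ρR).subtype (ρ A)
          = (TensorProduct.assoc ℂ V F F).symm (LinearMap.lTensor V Coalgebra.comul A.val)) ∧
      -- counit axiom
      (∀ A : indK π ρR,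
        (TensorProduct.rid ℂ (indK π ρR))
          (LinearMap.lTensor (indK π ρR) Coalgebra.counit (ρ A)) = A) ∧
      -- coassociativity axiom
      (∀ A : indK π ρR,
        (TensorProduct.assoc ℂ (indK π ρR) F F) (LinearMap.rTensor F ρ (ρ A))
          = LinearMap.lTensor (indK π ρR) Coalgebra.comul (ρ A)) := by
  have hcolinear :
      IsColinear (lTensorCoaction V comul) (lTensorCoaction V (lTensorCoaction K comul))
      (LinearMap.lTensor V (LinearMap.rTensor F π ∘ₗ Coalgebra.comul)
        - (TensorProduct.assoc ℂ V K F).toLinearMap ∘ₗ LinearMap.rTensor F ρR) :=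
    ((isColinear_rTensor π comul).comp isColinear_comul).lTensor.sub
      ((isColinear_assoc comul).comp (isColinear_rTensor ρR comul))
  have hsub : ∀ x ∈ indK π ρR, lTensorCoaction V comul x ∈
      LinearMap.range ((indK π ρR).subtype.rTensor F) :=
    fun _ hx ↦ hcolinear.mem_range_rTensor_subtype_ker hx
  have hcoaction := (indK π ρR).isCoaction_restrictCoaction _ hsub
    (isCoaction_lTensorCoaction isCoaction_comul)
  exact ⟨_, LinearMap.congr_fun ((indK π ρR).rTensor_subtype_comp_restrictCoaction _ hsub),
    LinearMap.congr_fun hcoaction.rid_counit, LinearMap.congr_fun hcoaction.coassoc⟩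

/-- The restriction of `id ⊗ Δ` to `ind_K^G(ρ_R)` takes values in
`ind_K^G(ρ_R) ⊗ F ⊆ V ⊗ F ⊗ F` and defines a right `F`-comodule structure on
`ind_K^G(ρ_R)`: the induced corepresentation. -/
theorem statement13
    (hcomul_star : ∀ (a : F) {ι : Type*} (r : Coalgebra.Repr ℂ a ι),
      Coalgebra.comul (star a) = ∑ i ∈ r.index, star (r.left i) ⊗ₜ[ℂ] star (r.right i))
    (hcounit_star : ∀ a : F, (Coalgebra.counit (star a) : ℂ) = starRingEnd ℂ (Coalgebra.counit a))
    (hSbij : Function.Bijective (HopfAlgebra.antipode (R := ℂ) (A := F)))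
    (π : F →ₗ[ℂ] K) (hπsurj : Function.Surjective π)
    (hπcomul : ∀ a : F, Coalgebra.comul (π a) = TensorProduct.map π π (Coalgebra.comul a))
    (hπcounit : ∀ a : F, (Coalgebra.counit (π a) : ℂ) = (Coalgebra.counit a : ℂ))
    (act : F →ₗ[ℂ] K →ₗ[ℂ] K)
    (hact_one : ∀ k : K, act 1 k = k)
    (hact_mul : ∀ (a b : F) (k : K), act (a * b) k = act a (act b k))
    (hact_π : ∀ a b : F, act a (π b) = π (a * b))
    (τK : K → K)
    (hτK_add : ∀ x y : K, τK (x + y) = τK x + τK y)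
    (hτK_smul : ∀ (c : ℂ) (x : K), τK (c • x) = (starRingEnd ℂ) c • τK x)
    (hτK_π : ∀ a : F, τK (π a) = π (star (HopfAlgebra.antipode (R := ℂ) a)))
    (ρR : V →ₗ[ℂ] V ⊗[ℂ] K)
    (hρ_counit : ∀ v : V,
      (TensorProduct.rid ℂ V) (LinearMap.lTensor V Coalgebra.counit (ρR v)) = v)
    (hρ_coassoc : ∀ v : V, (TensorProduct.assoc ℂ V K K) (LinearMap.rTensor K ρR (ρR v))
        = LinearMap.lTensor V Coalgebra.comul (ρR v))
    :
    ∃ ρ : indK π ρR →ₗ[ℂ] (indK π ρR) ⊗[ℂ] F,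
      -- `ρ` is the restriction of `id_V ⊗ Δ`
      (∀ A : indK π ρR,
        LinearMap.rTensor F (indK π ρR).subtype (ρ A)
          = (TensorProduct.assoc ℂ V F F).symm (LinearMap.lTensor V Coalgebra.comul A.val)) ∧
      -- counit axiom
      (∀ A : indK π ρR,
        (TensorProduct.rid ℂ (indK π ρR))
          (LinearMap.lTensor (indK π ρR) Coalgebra.counit (ρ A)) = A) ∧
      -- coassociativity axiom
      (∀ A : indK π ρR,
        (TensorProduct.assoc ℂ (indK π ρR) F F) (LinearMap.rTensor F ρ (ρ A))
          = LinearMap.lTensor (indK π ρR) Coalgebra.comul (ρ A)) :=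
  statement13_general π ρR
end
end

section
/- Let (K, π, τ_K) be a real coisotropic quantum left subgroup of F, ρ_R a right corepresentation of K on V, and A = Σ_i e_i⊗A_i ∈ ind_K^G(ρ_R), so that (π⊗id)(ΔA_i) = Σ_j a_{ij}⊗A_j. Then for each index i the following identity holds in K⊗F: Σ_j Σ_{(A_j)} S⁻¹((A_j)₍₁₎)·a_{ij} ⊗ (A_j)₍₂₎ = π(1)⊗A_i, where · denotes the left F-module action on K. -/
open scoped TensorProduct
open Coalgebra

noncomputable section

variable {F : Type*} [Ring F] [HopfAlgebra ℂ F] [StarRing F] [StarModule ℂ F]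
variable {K : Type*} [AddCommGroup K] [Module ℂ K] [Coalgebra ℂ K]
variable {V : Type*} [AddCommGroup V] [Module ℂ V]

/-!
Write `Φ(k ⊗ y) = Σ S⁻¹(y₍₁₎)·k ⊗ y₍₂₎`. The left-hand side is `Φ(Σ_j a_{ij} ⊗ A_j)`, which by
the induction condition is `Φ((π ⊗ id)(Δ A_i))`. Since `a·π(b) = π(ab)` and `Δ` is coassociative,
this equals `Σ π(S⁻¹(A_{i(2)}) A_{i(1)}) ⊗ A_{i(3)}`, and `Σ S⁻¹(a₍₂₎) a₍₁₎ = ε(a) 1` (apply the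
anti-multiplicative `S` to it) collapses the sum to `π(1) ⊗ A_i`.
-/

open TensorProduct

namespace HopfAlgebra

variable {R A : Type*} [CommSemiring R] [Semiring A] [HopfAlgebra R A] {Sinv : A →ₗ[R] A}

theorem sum_inv_antipode_right_mul_left_eq_smul
    (h₁ : Function.LeftInverse Sinv (antipode R)) (h₂ : Function.RightInverse Sinv (antipode R))
    {a : A} {ι : Type*} (r : Repr R a ι) :
    ∑ i ∈ r.index, Sinv (r.right i) * r.left i = counit (R := R) a • 1 := by
  apply h₁.injective
  simp only [map_sum, antipode_mul_antidistrib, h₂ _, map_smul, antipode_one]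
  exact sum_antipode_mul_eq_smul r

theorem sum_inv_antipode_mul_tmul_eq_one_tmul
    (h₁ : Function.LeftInverse Sinv (antipode R)) (h₂ : Function.RightInverse Sinv (antipode R))
    {a : A} {ι : Type*} {κ Λ : ι → Type*} (r : Repr R a ι)
    (r₁ : (i : ι) → Repr R (r.left i) (κ i)) (r₂ : (i : ι) → Repr R (r.right i) (Λ i)) :
    ∑ i ∈ r.index, ∑ j ∈ (r₂ i).index, (Sinv ((r₂ i).left j) * r.left i) ⊗ₜ[R] (r₂ i).right j
      = 1 ⊗ₜ[R] a := by
  let μ : A ⊗[R] (A ⊗[R] A) →ₗ[R] A ⊗[R] A :=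
    LinearMap.rTensor A (lift ((LinearMap.mul R A).flip.compl₂ Sinv)) ∘ₗ
      (TensorProduct.assoc R A A A).symm.toLinearMap
  have hμ (u v w : A) : μ (u ⊗ₜ (v ⊗ₜ w)) = (Sinv v * u) ⊗ₜ w := rfl
  have hcoassoc := congrArg μ (sum_tmul_tmul_eq r r₁ r₂)
  simp only [map_sum, hμ] at hcoassoc
  rw [← hcoassoc]
  simp only [← sum_tmul, sum_inv_antipode_right_mul_left_eq_smul h₁ h₂, smul_tmul]
  rw [← tmul_sum, sum_counit_smul]

end HopfAlgebra

section

variable {R A M : Type*} [CommSemiring R] [Semiring A] [HopfAlgebra R A]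
  [AddCommMonoid M] [Module R M]

/-- `k ⊗ y ↦ Σ Sinv(y₍₁₎)·k ⊗ y₍₂₎`, where `a·k = act a k`. -/
def invAntipodeAct (act : A →ₗ[R] M →ₗ[R] M) (Sinv : A →ₗ[R] A) :
    M ⊗[R] A →ₗ[R] M ⊗[R] A :=
  LinearMap.rTensor A (lift (act ∘ₗ Sinv).flip) ∘ₗ (TensorProduct.assoc R M A A).symm.toLinearMap
    ∘ₗ LinearMap.lTensor M comul

variable {act : A →ₗ[R] M →ₗ[R] M} {Sinv : A →ₗ[R] A}

theorem invAntipodeAct_tmul (k : M) {y : A} {ι : Type*} (r : Repr R y ι) :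
    invAntipodeAct act Sinv (k ⊗ₜ y) = ∑ i ∈ r.index, act (Sinv (r.left i)) k ⊗ₜ r.right i := by
  simp only [invAntipodeAct, LinearMap.coe_comp, LinearEquiv.coe_coe, Function.comp_apply,
    LinearMap.lTensor_tmul, ← r.eq, tmul_sum, map_sum, TensorProduct.assoc_symm_tmul, LinearMap.rTensor_tmul,
    lift.tmul, LinearMap.flip_apply]

theorem invAntipodeAct_rTensor_comul (π : A →ₗ[R] M) (hact : ∀ a b : A, act a (π b) = π (a * b))
    (h₁ : Function.LeftInverse Sinv (HopfAlgebra.antipode R))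
    (h₂ : Function.RightInverse Sinv (HopfAlgebra.antipode R)) (a : A) :
    invAntipodeAct act Sinv (LinearMap.rTensor A π (comul a)) = π 1 ⊗ₜ a := by
  let r := ℛ R a
  rw [← r.eq, map_sum, map_sum]
  simp only [LinearMap.rTensor_tmul, invAntipodeAct_tmul _ (ℛ R _), hact]
  rw [← LinearMap.rTensor_tmul, ← HopfAlgebra.sum_inv_antipode_mul_tmul_eq_one_tmul h₁ h₂ r
    (fun i => ℛ R (r.left i)) (fun i => ℛ R (r.right i))]
  simp only [map_sum, LinearMap.rTensor_tmul]

end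

theorem statement14_general {ι : Type*} [Fintype ι]
    (π : F →ₗ[ℂ] K)
    (act : F →ₗ[ℂ] K →ₗ[ℂ] K)
    (hact_π : ∀ a b : F, act a (π b) = π (a * b))
    (Sinv : F →ₗ[ℂ] F)
    (hSinv₁ : ∀ a : F, Sinv (HopfAlgebra.antipode (R := ℂ) a) = a)
    (hSinv₂ : ∀ a : F, HopfAlgebra.antipode (R := ℂ) (Sinv a) = a)
    (b : Module.Basis ι ℂ V) (aMat : ι → ι → K)
    (Acomp : ι → F)
    (hA : ∀ i : ι, LinearMap.rTensor F π (Coalgebra.comul (Acomp i))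
      = ∑ j : ι, aMat i j ⊗ₜ[ℂ] Acomp j) :
    ∀ i : ι,
      ∑ j : ι, LinearMap.rTensor F ((act.flip (aMat i j)) ∘ₗ Sinv)
          (Coalgebra.comul (Acomp j))
        = π 1 ⊗ₜ[ℂ] Acomp i := by
  intro i
  have hterm (j : ι) : LinearMap.rTensor F ((act.flip (aMat i j)) ∘ₗ Sinv) (comul (Acomp j))
      = invAntipodeAct act Sinv (aMat i j ⊗ₜ Acomp j) := by
    rw [invAntipodeAct_tmul _ (ℛ ℂ (Acomp j)), ← (ℛ ℂ (Acomp j)).eq, map_sum]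
    rfl
  simp only [hterm, ← map_sum, ← hA i]
  exact invAntipodeAct_rTensor_comul π hact_π hSinv₁ hSinv₂ (Acomp i)

/-- For `A = Σ_i e_i ⊗ A_i ∈ ind_K^G(ρ_R)`, i.e. `(π ⊗ id)(Δ A_i) = Σ_j a_{ij} ⊗ A_j`,
one has `Σ_j Σ_{(A_j)} S⁻¹((A_j)₍₁₎)·a_{ij} ⊗ (A_j)₍₂₎ = π(1) ⊗ A_i` in `K ⊗ F`. -/
theorem statement14 {ι : Type*} [Fintype ι]
    (hcomul_star : ∀ (a : F) {κ : Type*} (r : Coalgebra.Repr ℂ a κ),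
      Coalgebra.comul (star a) = ∑ i ∈ r.index, star (r.left i) ⊗ₜ[ℂ] star (r.right i))
    (hcounit_star : ∀ a : F, (Coalgebra.counit (star a) : ℂ) = starRingEnd ℂ (Coalgebra.counit a))
    (hSbij : Function.Bijective (HopfAlgebra.antipode (R := ℂ) (A := F)))
    (π : F →ₗ[ℂ] K) (hπsurj : Function.Surjective π)
    (hπcomul : ∀ a : F, Coalgebra.comul (π a) = TensorProduct.map π π (Coalgebra.comul a))
    (hπcounit : ∀ a : F, (Coalgebra.counit (π a) : ℂ) = (Coalgebra.counit a : ℂ))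
    (act : F →ₗ[ℂ] K →ₗ[ℂ] K)
    (hact_one : ∀ k : K, act 1 k = k)
    (hact_mul : ∀ (a b : F) (k : K), act (a * b) k = act a (act b k))
    (hact_π : ∀ a b : F, act a (π b) = π (a * b))
    (τK : K → K)
    (hτK_add : ∀ x y : K, τK (x + y) = τK x + τK y)
    (hτK_smul : ∀ (c : ℂ) (x : K), τK (c • x) = (starRingEnd ℂ) c • τK x)
    (hτK_π : ∀ a : F, τK (π a) = π (star (HopfAlgebra.antipode (R := ℂ) a)))
    (Sinv : F →ₗ[ℂ] F)
    (hSinv₁ : ∀ a : F, Sinv (HopfAlgebra.antipode (R := ℂ) a) = a)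
    (hSinv₂ : ∀ a : F, HopfAlgebra.antipode (R := ℂ) (Sinv a) = a)
    (ρR : V →ₗ[ℂ] V ⊗[ℂ] K)
    (hρ_counit : ∀ v : V,
      (TensorProduct.rid ℂ V) (LinearMap.lTensor V Coalgebra.counit (ρR v)) = v)
    (hρ_coassoc : ∀ v : V, (TensorProduct.assoc ℂ V K K) (LinearMap.rTensor K ρR (ρR v))
        = LinearMap.lTensor V Coalgebra.comul (ρR v))
    (b : Module.Basis ι ℂ V) (aMat : ι → ι → K)
    (hρmat : ∀ i : ι, ρR (b i) = ∑ j : ι, b j ⊗ₜ[ℂ] aMat j i)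
    (Acomp : ι → F)
    (hA : ∀ i : ι, LinearMap.rTensor F π (Coalgebra.comul (Acomp i))
      = ∑ j : ι, aMat i j ⊗ₜ[ℂ] Acomp j) :
    ∀ i : ι,
      ∑ j : ι, LinearMap.rTensor F ((act.flip (aMat i j)) ∘ₗ Sinv)
          (Coalgebra.comul (Acomp j))
        = π 1 ⊗ₜ[ℂ] Acomp i :=
  statement14_general π act hact_π Sinv hSinv₁ hSinv₂ b aMat Acomp hA
end
end

section
/- Let (K, π, τ_K) be a real coisotropic quantum left subgroup of F and ρ_R a unitary right corepresentation of K on the inner product space V with orthonormal basis {e_i} (unitarity: τ_K(a_{ij}) = a_{ji}). Then for all A = Σ_i e_i⊗A_i and B = Σ_i e_i⊗B_i in ind_K^G(ρ_R), the element ⟨A,B⟩_L := Σ_i A_i* B_i belongs to B_π. -/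
/-!
For `k ∈ K` and `a ∈ F` put `Γ(k ⊗ a) = Σ a₍₁₎* ▹ τ(k) ⊗ a₍₂₎*`, a conjugate-linear endomorphism
of `K ⊗ F`. Since `τ ∘ π = π ∘ * ∘ S` and `a ▹ π(b) = π(ab)`, one gets
`Γ((π ⊗ id)(Δa)) = (π ⊗ id)((Σ S(a₍₁₎) a₍₂₎ ⊗ a₍₃₎)*) = π(1) ⊗ a*`.
Unitarity `τ(a_{ji}) = a_{ij}` lets `Γ` absorb the matrix coefficients:
`(π ⊗ id)Δ(Σ_i A_i* B_i) = Σ_{i,j} (A_{i(1)}* ▹ a_{ij}) ⊗ A_{i(2)}* B_j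
  = Σ_j Γ((π ⊗ id)(Δ A_j)) (1 ⊗ B_j) = π(1) ⊗ Σ_j A_j* B_j`.
-/

open scoped TensorProduct
open Coalgebra

noncomputable section

variable {F : Type*} [Ring F] [HopfAlgebra ℂ F] [StarRing F] [StarModule ℂ F]
variable {K : Type*} [AddCommGroup K] [Module ℂ K] [Coalgebra ℂ K]
variable {V : Type*} [AddCommGroup V] [Module ℂ V]

universe w

section Repr

variable {R A : Type*} [CommSemiring R] [AddCommMonoid A] [Module R A] [CoalgebraStruct R A]

/-- Makes hypotheses quantified over representations indexed in one fixed universe applicable. -/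
def Coalgebra.Repr.reindexFin {a : A} {κ : Type*} (r : Coalgebra.Repr R a κ) :
    Coalgebra.Repr R a (ULift.{w} (Fin r.index.card)) where
  index := Finset.univ
  left i := r.left (r.index.equivFin.symm i.down)
  right i := r.right (r.index.equivFin.symm i.down)
  eq := by
    rw [← r.eq, ← Finset.sum_attach r.index (fun i => r.left i ⊗ₜ[R] r.right i)]
    exact Fintype.sum_equiv (Equiv.ulift.trans r.index.equivFin.symm) _ _ fun _ => rfl

lemma Coalgebra.comul_star_eq_star_comul [StarRing R] [StarAddMonoid A] [StarModule R A]
    (h : ∀ (a : A) {κ : Type w} (r : Coalgebra.Repr R a κ),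
      Coalgebra.comul (star a) = ∑ i ∈ r.index, star (r.left i) ⊗ₜ[R] star (r.right i))
    (a : A) : Coalgebra.comul (R := R) (star a) = star (Coalgebra.comul a) := by
  let r := (ℛ R a).reindexFin.{w}
  rw [h a r, ← r.eq, star_sum]
  rfl

end Repr

section Antipode

variable {R A : Type*} [CommSemiring R] [Semiring A] [HopfAlgebra R A]

def HopfAlgebra.antipodeMulComul : A ⊗[R] A →ₗ[R] A ⊗[R] A :=
  TensorProduct.lift ((LinearMap.mul R (A ⊗[R] A)).compl₁₂
    (Algebra.TensorProduct.includeLeft.toLinearMap ∘ₗ HopfAlgebra.antipode R) Coalgebra.comul)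

lemma HopfAlgebra.antipodeMulComul_tmul (x y : A) :
    antipodeMulComul (x ⊗ₜ[R] y) = (antipode R x ⊗ₜ[R] 1) * Coalgebra.comul y := rfl

lemma HopfAlgebra.antipodeMulComul_comul (a : A) :
    antipodeMulComul (Coalgebra.comul (R := R) a) = 1 ⊗ₜ[R] a := by
  -- `x ⊗ y ↦ (S x ⊗ 1) Δ y` is `(m ∘ (S ⊗ id)) ⊗ id` after `id ⊗ Δ`; coassociativity then
  -- leaves the antipode axiom.
  have hfactor : ∀ w : A ⊗[R] A, antipodeMulComul w = LinearMap.rTensor A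
      (LinearMap.mul' R A ∘ₗ (antipode R).rTensor A)
      ((TensorProduct.assoc R A A A).symm (Coalgebra.comul.lTensor A w)) := by
    intro w
    induction w using TensorProduct.induction_on with
    | zero => simp
    | tmul x y =>
      rw [antipodeMulComul_tmul, LinearMap.lTensor_tmul]
      generalize Coalgebra.comul (R := R) y = t
      induction t using TensorProduct.induction_on with
      | zero => simp
      | tmul u v => simp
      | add u v hu hv => rw [mul_add, hu, hv, TensorProduct.tmul_add, map_add, map_add]
    | add u v hu hv => simp_all
  calc antipodeMulComul (Coalgebra.comul a)
      = LinearMap.rTensor A (LinearMap.mul' R A ∘ₗ (antipode R).rTensor A ∘ₗ Coalgebra.comul)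
          (Coalgebra.comul a) := by
        rw [hfactor, Coalgebra.coassoc_symm_apply, ← LinearMap.rTensor_comp_apply]; rfl
    _ = 1 ⊗ₜ[R] a := by
        rw [mul_antipode_rTensor_comul, LinearMap.rTensor_comp_apply,
          Coalgebra.rTensor_counit_comul]
        simp

end Antipode

section Action

variable {R A M : Type*} [CommSemiring R] [Semiring A] [Algebra R A]
  [AddCommMonoid M] [Module R M] (act : A →ₗ[R] M →ₗ[R] M)

def tensorAct : A ⊗[R] A →ₗ[R] M ⊗[R] A →ₗ[R] M ⊗[R] A :=
  TensorProduct.lift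
    ((TensorProduct.mapBilinear (RingHom.id R) M A M A).compl₁₂ act (LinearMap.mul R A))

lemma tensorAct_tmul (x y : A) :
    tensorAct act (x ⊗ₜ[R] y) = TensorProduct.map (act x) (LinearMap.mulLeft R y) := rfl

lemma tensorAct_apply_tmul (v : A ⊗[R] A) (m : M) (z : A) :
    tensorAct act v (m ⊗ₜ[R] z) =
      (LinearMap.mulRight R z).lTensor M (tensorAct act v (m ⊗ₜ[R] 1)) := by
  induction v using TensorProduct.induction_on with
  | zero => simp
  | tmul x y => simp [tensorAct_tmul]
  | add u v hu hv => simp only [map_add, LinearMap.add_apply, hu, hv]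

variable {act} {π : A →ₗ[R] M}

lemma rTensor_mul_eq_tensorAct (hact : ∀ a b, act a (π b) = π (a * b)) (v w : A ⊗[R] A) :
    π.rTensor A (v * w) = tensorAct act v (π.rTensor A w) := by
  induction v using TensorProduct.induction_on with
  | zero => simp
  | tmul x y =>
    induction w using TensorProduct.induction_on with
    | zero => simp
    | tmul u z => simp [tensorAct_tmul, hact]
    | add u z hu hz => simp only [mul_add, map_add, hu, hz]
  | add u v hu hv => simp only [add_mul, map_add, LinearMap.add_apply, hu, hv]

end Action

section Conj

variable {R A M : Type*} [CommSemiring R] [StarRing R] [Semiring A] [StarRing A]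
  [HopfAlgebra R A] [StarModule R A] [AddCommMonoid M] [Module R M]
  (act : A →ₗ[R] M →ₗ[R] M) (τ : M →ₗ⋆[R] M)

def conjAct : M ⊗[R] A →ₗ⋆[R] M ⊗[R] A :=
  TensorProduct.lift <| LinearMap.mk₂'ₛₗ (starRingEnd R) (starRingEnd R)
    (fun m a => tensorAct act (Coalgebra.comul (star a)) (τ m ⊗ₜ[R] 1))
    (fun m₁ m₂ a => by simp only [map_add, TensorProduct.add_tmul])
    (fun c m a => by rw [map_smulₛₗ, ← TensorProduct.smul_tmul', map_smul])
    (fun m a₁ a₂ => by simp only [star_add, map_add, LinearMap.add_apply])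
    (fun c m a => by simp only [star_smul, map_smul, LinearMap.smul_apply, starRingEnd_apply])

lemma conjAct_tmul (m : M) (a : A) :
    conjAct act τ (m ⊗ₜ[R] a) = tensorAct act (Coalgebra.comul (star a)) (τ m ⊗ₜ[R] 1) := rfl

variable {act τ} {π : A →ₗ[R] M}

lemma conjAct_rTensor (hact : ∀ a b, act a (π b) = π (a * b))
    (hτ : ∀ a, τ (π a) = π (star (HopfAlgebra.antipode R a)))
    (hstar : ∀ a : A, Coalgebra.comul (R := R) (star a) = star (Coalgebra.comul a))
    (w : A ⊗[R] A) :
    conjAct act τ (π.rTensor A w) = π.rTensor A (star (HopfAlgebra.antipodeMulComul w)) := by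
  induction w using TensorProduct.induction_on with
  | zero => simp
  | tmul x y =>
    rw [LinearMap.rTensor_tmul, conjAct_tmul, hτ, ← LinearMap.rTensor_tmul,
      ← rTensor_mul_eq_tensorAct hact, HopfAlgebra.antipodeMulComul_tmul, star_mul,
      TensorProduct.star_tmul, star_one, hstar]
  | add u v hu hv => simp only [map_add, star_add, hu, hv]

lemma conjAct_rTensor_comul (hact : ∀ a b, act a (π b) = π (a * b))
    (hτ : ∀ a, τ (π a) = π (star (HopfAlgebra.antipode R a)))
    (hstar : ∀ a : A, Coalgebra.comul (R := R) (star a) = star (Coalgebra.comul a)) (a : A) :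
    conjAct act τ (π.rTensor A (Coalgebra.comul a)) = π 1 ⊗ₜ[R] star a := by
  rw [conjAct_rTensor hact hτ hstar, HopfAlgebra.antipodeMulComul_comul, TensorProduct.star_tmul,
    star_one, LinearMap.rTensor_tmul]

lemma rTensor_comul_sum_star_mul {ι : Type*} [Fintype ι]
    (hact : ∀ a b, act a (π b) = π (a * b))
    (hτ : ∀ a, τ (π a) = π (star (HopfAlgebra.antipode R a)))
    (hstar : ∀ a : A, Coalgebra.comul (R := R) (star a) = star (Coalgebra.comul a))
    (u : ι → ι → M) (hu : ∀ i j, τ (u i j) = u j i) (X Y : ι → A)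
    (hX : ∀ i, π.rTensor A (Coalgebra.comul (X i)) = ∑ j, u i j ⊗ₜ[R] X j)
    (hY : ∀ i, π.rTensor A (Coalgebra.comul (Y i)) = ∑ j, u i j ⊗ₜ[R] Y j) :
    π.rTensor A (Coalgebra.comul (∑ i, star (X i) * Y i)) = π 1 ⊗ₜ[R] ∑ i, star (X i) * Y i := by
  have hX_star : ∀ j, ∑ i, tensorAct act (Coalgebra.comul (star (X i))) (u i j ⊗ₜ[R] 1)
      = π 1 ⊗ₜ[R] star (X j) := by
    intro j
    simp only [← conjAct_rTensor_comul hact hτ hstar, hX, map_sum, conjAct_tmul, hu]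
  calc π.rTensor A (Coalgebra.comul (∑ i, star (X i) * Y i))
      = ∑ i, ∑ j, (LinearMap.mulRight R (Y j)).lTensor M
          (tensorAct act (Coalgebra.comul (star (X i))) (u i j ⊗ₜ[R] 1)) := by
        simp only [map_sum, Bialgebra.comul_mul, rTensor_mul_eq_tensorAct hact, hY,
          tensorAct_apply_tmul act _ _ (Y _)]
    _ = ∑ j, (LinearMap.mulRight R (Y j)).lTensor M (π 1 ⊗ₜ[R] star (X j)) := by
        rw [Finset.sum_comm]
        simp only [← map_sum, hX_star]
    _ = π 1 ⊗ₜ[R] ∑ i, star (X i) * Y i := by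
        simp [TensorProduct.tmul_sum]

end Conj

theorem statement15_general {ι : Type*} [Fintype ι]
    (hcomul_star : ∀ (a : F) {κ : Type*} (r : Coalgebra.Repr ℂ a κ),
      Coalgebra.comul (star a) = ∑ i ∈ r.index, star (r.left i) ⊗ₜ[ℂ] star (r.right i))
    (π : F →ₗ[ℂ] K)
    (act : F →ₗ[ℂ] K →ₗ[ℂ] K)
    (hact_π : ∀ a b : F, act a (π b) = π (a * b))
    (τK : K → K)
    (hτK_add : ∀ x y : K, τK (x + y) = τK x + τK y)
    (hτK_smul : ∀ (c : ℂ) (x : K), τK (c • x) = (starRingEnd ℂ) c • τK x)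
    (hτK_π : ∀ a : F, τK (π a) = π (star (HopfAlgebra.antipode (R := ℂ) a)))
    (b : Module.Basis ι ℂ V) (aMat : ι → ι → K)
    (hunit : ∀ i j : ι, τK (aMat i j) = aMat j i)
    (Acomp Bcomp : ι → F)
    (hA : ∀ i : ι, LinearMap.rTensor F π (Coalgebra.comul (Acomp i))
      = ∑ j : ι, aMat i j ⊗ₜ[ℂ] Acomp j)
    (hB : ∀ i : ι, LinearMap.rTensor F π (Coalgebra.comul (Bcomp i))
      = ∑ j : ι, aMat i j ⊗ₜ[ℂ] Bcomp j) :
    (∑ i : ι, star (Acomp i) * Bcomp i) ∈ Bpi π := by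
  let τ : K →ₗ⋆[ℂ] K := { toFun := τK, map_add' := hτK_add, map_smul' := hτK_smul }
  rw [Bpi, LinearMap.mem_ker, LinearMap.sub_apply, sub_eq_zero]
  exact rTensor_comul_sum_star_mul (τ := τ) hact_π hτK_π
    (Coalgebra.comul_star_eq_star_comul hcomul_star) aMat hunit Acomp Bcomp hA hB

/-- For a unitary right corepresentation `ρ_R` of a left coisotropic quantum subgroup and
`A, B ∈ ind_K^G(ρ_R)`, the element `⟨A,B⟩_L = Σ_i A_i* B_i` lies in `B_π`. -/
theorem statement15 {ι : Type*} [Fintype ι]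
    (hcomul_star : ∀ (a : F) {κ : Type*} (r : Coalgebra.Repr ℂ a κ),
      Coalgebra.comul (star a) = ∑ i ∈ r.index, star (r.left i) ⊗ₜ[ℂ] star (r.right i))
    (hcounit_star : ∀ a : F, (Coalgebra.counit (star a) : ℂ) = starRingEnd ℂ (Coalgebra.counit a))
    (hSbij : Function.Bijective (HopfAlgebra.antipode (R := ℂ) (A := F)))
    (π : F →ₗ[ℂ] K) (hπsurj : Function.Surjective π)
    (hπcomul : ∀ a : F, Coalgebra.comul (π a) = TensorProduct.map π π (Coalgebra.comul a))
    (hπcounit : ∀ a : F, (Coalgebra.counit (π a) : ℂ) = (Coalgebra.counit a : ℂ))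
    (act : F →ₗ[ℂ] K →ₗ[ℂ] K)
    (hact_one : ∀ k : K, act 1 k = k)
    (hact_mul : ∀ (a b : F) (k : K), act (a * b) k = act a (act b k))
    (hact_π : ∀ a b : F, act a (π b) = π (a * b))
    (τK : K → K)
    (hτK_add : ∀ x y : K, τK (x + y) = τK x + τK y)
    (hτK_smul : ∀ (c : ℂ) (x : K), τK (c • x) = (starRingEnd ℂ) c • τK x)
    (hτK_π : ∀ a : F, τK (π a) = π (star (HopfAlgebra.antipode (R := ℂ) a)))
    (Sinv : F →ₗ[ℂ] F)
    (hSinv₁ : ∀ a : F, Sinv (HopfAlgebra.antipode (R := ℂ) a) = a)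
    (hSinv₂ : ∀ a : F, HopfAlgebra.antipode (R := ℂ) (Sinv a) = a)
    (ρR : V →ₗ[ℂ] V ⊗[ℂ] K)
    (hρ_counit : ∀ v : V,
      (TensorProduct.rid ℂ V) (LinearMap.lTensor V Coalgebra.counit (ρR v)) = v)
    (hρ_coassoc : ∀ v : V, (TensorProduct.assoc ℂ V K K) (LinearMap.rTensor K ρR (ρR v))
        = LinearMap.lTensor V Coalgebra.comul (ρR v))
    (b : Module.Basis ι ℂ V) (aMat : ι → ι → K)
    (hρmat : ∀ i : ι, ρR (b i) = ∑ j : ι, b j ⊗ₜ[ℂ] aMat j i)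
    (hunit : ∀ i j : ι, τK (aMat i j) = aMat j i)
    (Acomp Bcomp : ι → F)
    (hA : ∀ i : ι, LinearMap.rTensor F π (Coalgebra.comul (Acomp i))
      = ∑ j : ι, aMat i j ⊗ₜ[ℂ] Acomp j)
    (hB : ∀ i : ι, LinearMap.rTensor F π (Coalgebra.comul (Bcomp i))
      = ∑ j : ι, aMat i j ⊗ₜ[ℂ] Bcomp j) :
    (∑ i : ι, star (Acomp i) * Bcomp i) ∈ Bpi π :=
  statement15_general hcomul_star π act hact_π τK hτK_add hτK_smul hτK_π b aMat hunit Acomp Bcomp hA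
    hB
end
end
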